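/- Define, for real α ≥ 0 and β ∈ ℂ, D(α, β) := min{ 2|β|, √2·|α − β|, √2·|α + β|, √2·|α − iβ|, √2·|α + iβ|, 2α }, and let F be the set of pairs (α, β) with α ∈ ℝ, α ≥ 0, β ∈ ℂ, satisfying |α + β| ≤ 1, |α − β| ≤ 1, −π/4 ≤ arg(α + β) ≤ 0, and 0 ≤ arg(α − β) ≤ π/4. Then 2·sin(π/8) is the greatest element of { D(α, β) : (α, β) ∈ F }; in particular D(α, β) ≤ 2·sin(π/8) for all (α, β) ∈ F, with equality at α = cos(π/8), β = −i·sin(π/8). -/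

import Mathlib

open Real Complex

/-- The minimum pairwise Euclidean distance of the 8-point composite constellation. -/
noncomputable def Dmin (α : ℝ) (β : ℂ) : ℝ :=
  min (min (min (2 * ‖β‖) (Real.sqrt 2 * ‖((α : ℝ) - β)‖))
        (min (Real.sqrt 2 * ‖((α : ℝ) + β)‖)
          (Real.sqrt 2 * ‖((α : ℝ) - Complex.I * β)‖)))
      (min (Real.sqrt 2 * ‖((α : ℝ) + Complex.I * β)‖) (2 * α))

/-- The feasible set of problem P1′ when the direct link is absent. -/
def Feas (α : ℝ) (β : ℂ) : Prop :=
  0 ≤ α ∧ ‖((α : ℝ) + β)‖ ≤ 1 ∧ ‖((α : ℝ) - β)‖ ≤ 1 ∧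
    -(π / 4) ≤ Complex.arg ((α : ℝ) + β) ∧ Complex.arg ((α : ℝ) + β) ≤ 0 ∧
    0 ≤ Complex.arg ((α : ℝ) - β) ∧ Complex.arg ((α : ℝ) - β) ≤ π / 4

/-!
Put w = α + β and v = α − β. The constellation is the orbit of {w, v} under multiplication by
i, and ‖v − w‖ = 2‖β‖, ‖v − i w‖ = √2‖α − iβ‖, √2‖w‖, √2‖v‖ are among its distances. The phase
constraints give arg w ≤ arg v ≤ arg w + π/2, so one of the angular gaps from w to v and from v
to i w is at most π/4. If √2‖w‖ and √2‖v‖ exceed 2 sin(π/8), then ‖w‖, ‖v‖ ∈ [1/2, 1], and the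
law of cosines bounds the distance across that gap by √(2 − √2) = 2 sin(π/8).
-/

namespace Complex

theorem norm_sub_sq_eq_cos_arg_sub (x y : ℂ) :
    ‖y - x‖ ^ 2 = ‖x‖ ^ 2 + ‖y‖ ^ 2 - 2 * ‖x‖ * ‖y‖ * Real.cos (arg y - arg x) := by
  simp only [Complex.sq_norm, normSq_apply, sub_re, sub_im, Real.cos_sub]
  simp only [← norm_mul_cos_arg x, ← norm_mul_sin_arg x, ← norm_mul_cos_arg y,
    ← norm_mul_sin_arg y]
  ring

theorem norm_sub_I_mul_sq_eq_sin_arg_sub (x y : ℂ) :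
    ‖y - I * x‖ ^ 2 = ‖x‖ ^ 2 + ‖y‖ ^ 2 - 2 * ‖x‖ * ‖y‖ * Real.sin (arg y - arg x) := by
  simp only [Complex.sq_norm, normSq_apply, sub_re, sub_im, mul_re, mul_im, I_re, I_im,
    Real.sin_sub]
  simp only [← norm_mul_cos_arg x, ← norm_mul_sin_arg x, ← norm_mul_cos_arg y,
    ← norm_mul_sin_arg y]
  ring

end Complex

theorem sq_two_mul_sin_pi_div_eight : (2 * Real.sin (π / 8)) ^ 2 = 2 - √2 := by
  rw [Real.sin_pi_div_eight, mul_div_cancel₀ _ two_ne_zero, sq_sqrt]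
  nlinarith [sq_sqrt (zero_le_two : (0 : ℝ) ≤ 2), sqrt_nonneg 2]

theorem sin_pi_div_eight_pos : 0 < Real.sin (π / 8) :=
  sin_pos_of_pos_of_lt_pi (by positivity) (by linarith [pi_pos])

theorem sq_add_sq_sub_two_mul_mul_le {a b c : ℝ} (ha : 1 / 2 ≤ a) (ha' : a ≤ 1)
    (hb : 1 / 2 ≤ b) (hb' : b ≤ 1) (hc : √2 / 2 ≤ c) :
    a ^ 2 + b ^ 2 - 2 * a * b * c ≤ 2 - √2 := by
  have hs : √2 ^ 2 = 2 := sq_sqrt zero_le_two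
  have hs' : √2 < 3 / 2 := by nlinarith [sqrt_nonneg 2]
  have hab : √2 * (a * b) ≤ 2 * a * b * c := by
    nlinarith [mul_nonneg (by linarith : 0 ≤ a) (by linarith : 0 ≤ b)]
  -- with `a ^ 2 ≤ 3 / 2 * a - 1 / 2`, the slack is at least
  -- `(3 / 2 - √2) (u + v) + √2 u v`, where `u = 1 - a`, `v = 1 - b`
  nlinarith [mul_nonneg (sub_nonneg.2 ha) (sub_nonneg.2 ha'),
    mul_nonneg (sub_nonneg.2 hb) (sub_nonneg.2 hb'),
    mul_nonneg (mul_nonneg (sub_nonneg.2 ha') (sub_nonneg.2 hb')) (sqrt_nonneg 2),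
    mul_nonneg (sub_nonneg.2 hs'.le) (sub_nonneg.2 ha'),
    mul_nonneg (sub_nonneg.2 hs'.le) (sub_nonneg.2 hb')]

theorem min_norm_sub_le_two_mul_sin_pi_div_eight {w v : ℂ} (hw : ‖w‖ ≤ 1) (hv : ‖v‖ ≤ 1)
    (h₁ : arg w ≤ arg v) (h₂ : arg v ≤ arg w + π / 2) :
    min (min ‖v - w‖ ‖v - I * w‖) (min (√2 * ‖w‖) (√2 * ‖v‖)) ≤ 2 * Real.sin (π / 8) := by
  set p := 2 * Real.sin (π / 8)
  have hp : 0 ≤ p := by linarith [sin_pi_div_eight_pos]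
  have half_lt : ∀ r : ℝ, 0 ≤ r → p < √2 * r → 1 / 2 < r := fun r hr h => by
    have hs : √2 ^ 2 = 2 := sq_sqrt zero_le_two
    have : p ^ 2 < 2 * r ^ 2 := by nlinarith [pow_lt_pow_left₀ h hp two_ne_zero]
    nlinarith [sq_two_mul_sin_pi_div_eight, sqrt_nonneg 2]
  by_contra! h
  simp only [lt_min_iff] at h
  obtain ⟨⟨hvw, hvIw⟩, hw', hv'⟩ := h
  have hw₀ := half_lt _ (norm_nonneg w) hw'
  have hv₀ := half_lt _ (norm_nonneg v) hv'
  rcases le_total (arg v - arg w) (π / 4) with hφ | hφ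
  · have hcos : √2 / 2 ≤ Real.cos (arg v - arg w) := by
      rw [← cos_pi_div_four]
      exact cos_le_cos_of_nonneg_of_le_pi (by linarith) (by linarith [pi_pos]) hφ
    have := sq_add_sq_sub_two_mul_mul_le hw₀.le hw hv₀.le hv hcos
    rw [← Complex.norm_sub_sq_eq_cos_arg_sub, ← sq_two_mul_sin_pi_div_eight] at this
    exact absurd this (not_le.2 (pow_lt_pow_left₀ hvw hp two_ne_zero))
  · have hsin : √2 / 2 ≤ Real.sin (arg v - arg w) := by
      rw [← sin_pi_div_four]
      exact sin_le_sin_of_le_of_le_pi_div_two (by linarith [pi_pos]) (by linarith) hφ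
    have := sq_add_sq_sub_two_mul_mul_le hw₀.le hw hv₀.le hv hsin
    rw [← Complex.norm_sub_I_mul_sq_eq_sin_arg_sub, ← sq_two_mul_sin_pi_div_eight] at this
    exact absurd this (not_le.2 (pow_lt_pow_left₀ hvIw hp two_ne_zero))

theorem Dmin_le_of_feas {α : ℝ} {β : ℂ} (h : Feas α β) : Dmin α β ≤ 2 * Real.sin (π / 8) := by
  obtain ⟨-, hw, hv, hw₁, hw₂, hv₁, hv₂⟩ := h
  refine le_trans ?_ (min_norm_sub_le_two_mul_sin_pi_div_eight hw hv (by linarith)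
    (by linarith))
  have h₁ : ‖((α : ℂ) - β) - ((α : ℂ) + β)‖ = 2 * ‖β‖ := by
    rw [show ((α : ℂ) - β) - ((α : ℂ) + β) = -(2 * β) by ring, norm_neg, norm_mul]
    norm_num
  have h₂ : ‖((α : ℂ) - β) - I * ((α : ℂ) + β)‖ = √2 * ‖(α : ℂ) - I * β‖ := by
    rw [show ((α : ℂ) - β) - I * ((α : ℂ) + β) = (1 - I) * ((α : ℂ) - I * β) by
      ring_nf; rw [I_sq]; ring, norm_mul]
    congr 1
    rw [Complex.norm_def]
    norm_num [normSq_apply]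
  rw [h₁, h₂, Dmin]
  simp only [le_min_iff, min_le_iff, le_refl, true_or, or_true, and_self]

theorem sin_pi_div_eight_le_cos : Real.sin (π / 8) ≤ Real.cos (π / 8) := by
  rw [Real.sin_pi_div_eight, Real.cos_pi_div_eight]
  gcongr
  linarith [sqrt_nonneg 2]

theorem sqrt_two_mul_cos_sub_sin_pi_div_eight :
    √2 * (Real.cos (π / 8) - Real.sin (π / 8)) = 2 * Real.sin (π / 8) := by
  have hsc : 2 * Real.sin (π / 8) * Real.cos (π / 8) = √2 / 2 := by
    rw [← Real.sin_two_mul, show 2 * (π / 8) = π / 4 by ring, sin_pi_div_four]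
  refine (pow_left_inj₀ (mul_nonneg (sqrt_nonneg 2) (sub_nonneg.2 sin_pi_div_eight_le_cos))
    (by linarith [sin_pi_div_eight_pos]) two_ne_zero).1 ?_
  rw [sq_two_mul_sin_pi_div_eight, mul_pow, sq_sqrt zero_le_two]
  linear_combination 2 * Real.sin_sq_add_cos_sq (π / 8) - 2 * hsc

section Optimum

local notation "c₈" => Real.cos (π / 8)
local notation "s₈" => Real.sin (π / 8)

theorem ofReal_cos_add_neg_I_mul_sin :
    (c₈ : ℂ) + -I * (s₈ : ℂ) = Complex.cos ↑(-(π / 8)) + Complex.sin ↑(-(π / 8)) * I := by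
  rw [← ofReal_cos, ← ofReal_sin, Real.cos_neg, Real.sin_neg]
  push_cast
  ring

theorem ofReal_cos_sub_neg_I_mul_sin :
    (c₈ : ℂ) - -I * (s₈ : ℂ) = Complex.cos ↑(π / 8) + Complex.sin ↑(π / 8) * I := by
  rw [← ofReal_cos, ← ofReal_sin]
  ring

theorem feas_cos_pi_div_eight : Feas c₈ (-I * (s₈ : ℂ)) := by
  have hπ := pi_pos
  have hargw : arg ((c₈ : ℂ) + -I * (s₈ : ℂ)) = -(π / 8) := by
    rw [ofReal_cos_add_neg_I_mul_sin, arg_cos_add_sin_mul_I ⟨by linarith, by linarith⟩]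
  have hargv : arg ((c₈ : ℂ) - -I * (s₈ : ℂ)) = π / 8 := by
    rw [ofReal_cos_sub_neg_I_mul_sin, arg_cos_add_sin_mul_I ⟨by linarith, by linarith⟩]
  refine ⟨cos_nonneg_of_mem_Icc ⟨by linarith, by linarith⟩,
    (ofReal_cos_add_neg_I_mul_sin ▸ norm_cos_add_sin_mul_I _).le,
    (ofReal_cos_sub_neg_I_mul_sin ▸ norm_cos_add_sin_mul_I _).le, ?_, ?_, ?_, ?_⟩ <;>
  simp only [hargw, hargv] <;> linarith

theorem Dmin_cos_pi_div_eight : Dmin c₈ (-I * (s₈ : ℂ)) = 2 * s₈ := by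
  have hs := sin_pi_div_eight_pos
  have hcs := sin_pi_div_eight_le_cos
  have hI : I * (-I * (s₈ : ℂ)) = (s₈ : ℂ) := by
    rw [← mul_assoc, mul_neg, I_mul_I, neg_neg, one_mul]
  have hβ : ‖-I * (s₈ : ℂ)‖ = s₈ := by simp
  have hsub : ‖(c₈ : ℂ) - I * (-I * (s₈ : ℂ))‖ = c₈ - s₈ := by
    rw [hI, ← ofReal_sub, norm_real, Real.norm_eq_abs, abs_of_nonneg (by linarith)]
  have hadd : ‖(c₈ : ℂ) + I * (-I * (s₈ : ℂ))‖ = c₈ + s₈ := by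
    rw [hI, ← ofReal_add, norm_real, Real.norm_eq_abs, abs_of_nonneg (by linarith)]
  have key := sqrt_two_mul_cos_sub_sin_pi_div_eight
  rw [Dmin, hβ, hsub, hadd, ofReal_cos_add_neg_I_mul_sin, ofReal_cos_sub_neg_I_mul_sin,
    norm_cos_add_sin_mul_I, norm_cos_add_sin_mul_I, mul_one, key]
  have hp : 2 * s₈ ≤ √2 := by
    nlinarith [sq_two_mul_sin_pi_div_eight, sq_sqrt (zero_le_two : (0 : ℝ) ≤ 2), sqrt_nonneg 2]
  have hp' : 2 * s₈ ≤ √2 * (c₈ + s₈) := by nlinarith [sqrt_nonneg 2]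
  refine le_antisymm (min_le_of_left_le (min_le_of_left_le (min_le_left _ _)))
    (le_min (le_min (le_min le_rfl hp) (le_min hp le_rfl)) (le_min hp' (by linarith)))

end Optimum

theorem stmt_14 :
    IsGreatest {d : ℝ | ∃ α : ℝ, ∃ β : ℂ, Feas α β ∧ d = Dmin α β} (2 * Real.sin (π / 8)) ∧
    Dmin (Real.cos (π / 8)) (-Complex.I * ((Real.sin (π / 8) : ℝ) : ℂ)) =
      2 * Real.sin (π / 8) := by
  refine ⟨⟨⟨_, _, feas_cos_pi_div_eight, Dmin_cos_pi_div_eight.symm⟩, ?_⟩,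
    Dmin_cos_pi_div_eight⟩
  rintro d ⟨α, β, hfeas, rfl⟩
  exact Dmin_le_of_feas hfeas
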